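/- arXiv:2012.15293 — 3 statements merged into one kernel-verified Lean document; each statement's English description precedes it below -/
import Mathlib

section
/- Let V be a vector space, n = km for positive integers k, m, and let {v_A : A ⊆ [n], |A| = m} be a family of vectors in V. Then ∑_{|A|=m} v_A = (1/k^m) · C(km, m) · (1/|Π_{k,m}|) · ∑_{π=(B_1,...,B_m) ∈ Π_{k,m}} ∑_{i_1 ∈ B_1} ... ∑_{i_m ∈ B_m} v_{{i_1,...,i_m}}. -/
open Finset

/-- The set of ordered partitions of `[k*m]` into `m` pairwise disjoint blocks of
size `k` whose union is everything. -/
def orderedPartitions (k m : ℕ) : Finset (Fin m → Finset (Fin (k * m))) :=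
  Finset.univ.filter fun B =>
    (∀ l, (B l).card = k) ∧ (∀ l l', l ≠ l' → Disjoint (B l) (B l')) ∧
      Finset.univ.biUnion B = Finset.univ

/-!
For a fixed partition `π`, a choice `i_l ∈ B_l` is injective, so `{i_1, …, i_m}` runs bijectively
over the `m`-sets meeting every block. Exchanging the sums therefore turns the right-hand sum
into `∑_A T(A) v_A`, where `T(A)` counts the partitions each of whose blocks `A` meets.
Permutations of `[n]` act on `Π_{k,m}` and transitively on `m`-sets, so `T(A) = T` is constant;
taking `v ≡ 1` gives `|Π_{k,m}| k^m = C(km, m) T`, which is the normalising constant.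
-/

open Fintype Function Pointwise

section Transversal

variable {ι α : Type*} [Fintype ι] [DecidableEq ι] {π : ι → Finset α}

theorem injective_of_mem_piFinset (hπ : Pairwise (Disjoint on π)) {i : ι → α}
    (hi : i ∈ piFinset π) : Function.Injective i := by
  intro a b hab
  by_contra hne
  exact disjoint_left.mp (hπ hne) (mem_piFinset.mp hi a) (hab ▸ mem_piFinset.mp hi b)

variable [DecidableEq α]

theorem injOn_image_univ_piFinset (hπ : Pairwise (Disjoint on π)) :
    Set.InjOn (fun i : ι → α => univ.image i) (piFinset π) := by
  intro i hi j hj (hij : univ.image i = univ.image j)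
  funext l
  obtain ⟨l', -, hl'⟩ := mem_image.mp (hij ▸ mem_image_of_mem j (mem_univ l))
  by_contra hne
  have hl'l : l' ≠ l := by rintro rfl; exact hne hl'
  exact disjoint_left.mp (hπ hl'l) (mem_piFinset.mp hi l') (hl' ▸ mem_piFinset.mp hj l)

theorem image_piFinset_eq_filter [Fintype α] (hπ : Pairwise (Disjoint on π)) :
    (piFinset π).image (fun i => univ.image i) =
      univ.filter (fun A : Finset α => #A = card ι ∧ ∀ l, (A ∩ π l).Nonempty) := by
  ext A
  simp only [mem_image, mem_filter, mem_univ, true_and]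
  constructor
  · rintro ⟨i, hi, rfl⟩
    refine ⟨by rw [card_image_of_injective _ (injective_of_mem_piFinset hπ hi), card_univ],
      fun l => ⟨i l, mem_inter.mpr ⟨mem_image_of_mem _ (mem_univ l), mem_piFinset.mp hi l⟩⟩⟩
  · rintro ⟨hcard, hmeets⟩
    choose i hi using hmeets
    have hiπ : i ∈ piFinset π := mem_piFinset.mpr fun l => (mem_inter.mp (hi l)).2
    refine ⟨i, hiπ, eq_of_subset_of_card_le ?_ ?_⟩
    · intro x hx
      obtain ⟨l, -, rfl⟩ := mem_image.mp hx
      exact (mem_inter.mp (hi l)).1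
    · rw [card_image_of_injective _ (injective_of_mem_piFinset hπ hiπ), card_univ, hcard]

theorem sum_piFinset_image_univ [Fintype α] {M : Type*} [AddCommMonoid M]
    (hπ : Pairwise (Disjoint on π)) (f : Finset α → M) :
    ∑ i ∈ piFinset π, f (univ.image i) =
      ∑ A ∈ univ.filter (fun A : Finset α => #A = card ι),
        if ∀ l, (A ∩ π l).Nonempty then f A else 0 := by
  rw [← sum_filter, filter_filter, ← image_piFinset_eq_filter hπ,
    sum_image (injOn_image_univ_piFinset hπ)]

end Transversal

namespace orderedPartitions

variable {k m : ℕ}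

theorem mem_iff {π : Fin m → Finset (Fin (k * m))} :
    π ∈ orderedPartitions k m ↔
      (∀ l, #(π l) = k) ∧ Pairwise (Disjoint on π) ∧ ∀ x, ∃ l, x ∈ π l := by
  simp [orderedPartitions, Pairwise, Function.onFun, eq_univ_iff_forall]

theorem nonempty (k m : ℕ) : (orderedPartitions k m).Nonempty := by
  let e := (finProdFinEquiv : Fin k × Fin m ≃ Fin (k * m))
  refine ⟨fun l => univ.image fun j => e (j, l), mem_iff.mpr ⟨fun l => ?_, fun l l' hll' => ?_,
    fun x => ⟨(e.symm x).2, mem_image.mpr ⟨(e.symm x).1, mem_univ _, by simp⟩⟩⟩⟩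
  · rw [card_image_of_injective _ fun a b h => (Prod.ext_iff.mp (e.injective h)).1, card_univ,
      Fintype.card_fin]
  · simp only [Function.onFun, disjoint_left, mem_image]
    rintro _ ⟨j, -, rfl⟩ ⟨j', -, h⟩
    exact hll' (Prod.ext_iff.mp (e.injective h)).2.symm

theorem smul_mem (σ : Equiv.Perm (Fin (k * m))) {π : Fin m → Finset (Fin (k * m))}
    (hπ : π ∈ orderedPartitions k m) : σ • π ∈ orderedPartitions k m := by
  obtain ⟨hcard, hdisj, hcover⟩ := mem_iff.mp hπ
  refine mem_iff.mpr ⟨fun l => (card_smul_finset σ (π l)).trans (hcard l), fun l l' hll' => ?_,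
    fun x => ?_⟩
  · rw [Function.onFun, disjoint_left]
    intro x hx hx'
    rw [Pi.smul_apply, ← inv_smul_mem_iff] at hx hx'
    exact disjoint_left.mp (hdisj hll') hx hx'
  · obtain ⟨l, hl⟩ := hcover (σ⁻¹ • x)
    exact ⟨l, inv_smul_mem_iff.mp hl⟩

end orderedPartitions

def partitionsMeeting (k m : ℕ) (A : Finset (Fin (k * m))) :
    Finset (Fin m → Finset (Fin (k * m))) :=
  (orderedPartitions k m).filter fun π => ∀ l, (A ∩ π l).Nonempty

section partitionsMeeting

variable {k m : ℕ}

theorem mem_partitionsMeeting {A : Finset (Fin (k * m))} {π : Fin m → Finset (Fin (k * m))} :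
    π ∈ partitionsMeeting k m A ↔ π ∈ orderedPartitions k m ∧ ∀ l, (A ∩ π l).Nonempty :=
  mem_filter

theorem smul_mem_partitionsMeeting (σ : Equiv.Perm (Fin (k * m))) {A : Finset (Fin (k * m))}
    {π : Fin m → Finset (Fin (k * m))} (hπ : π ∈ partitionsMeeting k m A) :
    σ • π ∈ partitionsMeeting k m (σ • A) := by
  rw [mem_partitionsMeeting] at hπ ⊢
  refine ⟨orderedPartitions.smul_mem σ hπ.1, fun l => ?_⟩
  rw [Pi.smul_apply, ← smul_finset_inter]
  exact (hπ.2 l).smul_finset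

theorem card_partitionsMeeting_smul (σ : Equiv.Perm (Fin (k * m)))
    (A : Finset (Fin (k * m))) :
    #(partitionsMeeting k m (σ • A)) = #(partitionsMeeting k m A) :=
  card_nbij' (σ⁻¹ • ·) (σ • ·)
    (fun _ hπ => by simpa using smul_mem_partitionsMeeting σ⁻¹ hπ)
    (fun _ hπ => smul_mem_partitionsMeeting σ hπ)
    (fun _ _ => smul_inv_smul σ _) (fun _ _ => inv_smul_smul σ _)

theorem card_partitionsMeeting_eq {A A' : Finset (Fin (k * m))} (hA : #A = m) (hA' : #A' = m) :
    #(partitionsMeeting k m A) = #(partitionsMeeting k m A') := by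
  have := Set.powersetCard.isPretransitive (α := Fin (k * m)) (n := m)
  obtain ⟨σ, hσ⟩ := MulAction.exists_smul_eq (Equiv.Perm (Fin (k * m)))
    (Set.powersetCard.ofCard hA) (Set.powersetCard.ofCard hA')
  have hσA : σ • A = A' := by simpa using congrArg Subtype.val hσ
  rw [← hσA, card_partitionsMeeting_smul]

theorem sum_sum_piFinset_eq_sum_card_smul {M : Type*} [AddCommMonoid M]
    (v : Finset (Fin (k * m)) → M) :
    ∑ π ∈ orderedPartitions k m, ∑ i ∈ piFinset π, v (univ.image i) =
      ∑ A ∈ univ.filter (fun A : Finset (Fin (k * m)) => #A = m),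
        #(partitionsMeeting k m A) • v A := by
  calc _ = ∑ π ∈ orderedPartitions k m,
          ∑ A ∈ univ.filter (fun A : Finset (Fin (k * m)) => #A = m),
            if ∀ l, (A ∩ π l).Nonempty then v A else 0 := by
        refine sum_congr rfl fun π hπ => ?_
        rw [sum_piFinset_image_univ (orderedPartitions.mem_iff.mp hπ).2.1, Fintype.card_fin]
        congr!
    _ = _ := by
        rw [sum_comm]
        refine sum_congr rfl fun A _ => ?_
        rw [← sum_filter, sum_const]
        rfl

theorem sum_sum_piFinset_eq_card_smul_sum {M : Type*} [AddCommMonoid M]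
    (v : Finset (Fin (k * m)) → M) {A₀ : Finset (Fin (k * m))} (hA₀ : #A₀ = m) :
    ∑ π ∈ orderedPartitions k m, ∑ i ∈ piFinset π, v (univ.image i) =
      #(partitionsMeeting k m A₀) •
        ∑ A ∈ univ.filter (fun A : Finset (Fin (k * m)) => #A = m), v A := by
  rw [sum_sum_piFinset_eq_sum_card_smul, smul_sum]
  exact sum_congr rfl fun A hA => by rw [card_partitionsMeeting_eq (mem_filter.mp hA).2 hA₀]

theorem card_orderedPartitions_mul_pow {A₀ : Finset (Fin (k * m))} (hA₀ : #A₀ = m) :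
    #(orderedPartitions k m) * k ^ m = (k * m).choose m * #(partitionsMeeting k m A₀) := by
  have hcount := sum_sum_piFinset_eq_card_smul_sum (fun _ => 1) hA₀
  simp only [sum_const, smul_eq_mul, mul_one] at hcount
  rw [Finset.sum_congr rfl fun π hπ => by
    rw [card_piFinset, prod_congr rfl fun l _ => (orderedPartitions.mem_iff.mp hπ).1 l]] at hcount
  have hchoose : #(univ.filter fun A : Finset (Fin (k * m)) => #A = m) = (k * m).choose m := by
    rw [← powerset_univ, ← powersetCard_eq_filter, card_powersetCard, Finset.card_fin]
  simpa [hchoose, mul_comm] using hcount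

end partitionsMeeting

theorem stmt_1_general {V : Type*} [AddCommGroup V] [Module ℝ V] (k m : ℕ) (hk : 0 < k)
    (v : Finset (Fin (k * m)) → V) :
    ∑ A ∈ Finset.univ.filter (fun A : Finset (Fin (k * m)) => A.card = m), v A
      = ((((k : ℝ) ^ m)⁻¹ * ((k * m).choose m : ℝ)) * ((orderedPartitions k m).card : ℝ)⁻¹) •
          ∑ π ∈ orderedPartitions k m, ∑ i ∈ Fintype.piFinset (fun l => π l),
            v (Finset.image i Finset.univ) := by
  obtain ⟨A₀, -, hA₀⟩ := exists_subset_card_eq (s := (univ : Finset (Fin (k * m))))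
    (by simpa using Nat.le_mul_of_pos_left m hk)
  have hcount : (#(orderedPartitions k m) * k ^ m : ℝ) =
      (k * m).choose m * #(partitionsMeeting k m A₀) := by
    exact_mod_cast card_orderedPartitions_mul_pow hA₀
  have hP : (#(orderedPartitions k m) : ℝ) ≠ 0 := by
    exact_mod_cast (orderedPartitions.nonempty k m).card_pos.ne'
  have hkm : (k : ℝ) ^ m ≠ 0 := by positivity
  have hscalar : ((k : ℝ) ^ m)⁻¹ * (k * m).choose m * (#(orderedPartitions k m) : ℝ)⁻¹ *
      #(partitionsMeeting k m A₀) = 1 := by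
    field_simp
    linarith
  rw [sum_sum_piFinset_eq_card_smul_sum v hA₀, ← Nat.cast_smul_eq_nsmul ℝ, smul_smul, hscalar,
    one_smul]

theorem stmt_1 {V : Type*} [AddCommGroup V] [Module ℝ V] (k m : ℕ) (hk : 0 < k) (hm : 0 < m)
    (v : Finset (Fin (k * m)) → V) :
    ∑ A ∈ Finset.univ.filter (fun A : Finset (Fin (k * m)) => A.card = m), v A
      = ((((k : ℝ) ^ m)⁻¹ * ((k * m).choose m : ℝ)) * ((orderedPartitions k m).card : ℝ)⁻¹) •
          ∑ π ∈ orderedPartitions k m, ∑ i ∈ Fintype.piFinset (fun l => π l),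
            v (Finset.image i Finset.univ) :=
  stmt_1_general k m hk v
end

section
/- Let X be a normed space over ℂ, ‖·‖ any norm on ℂⁿ, P : ℂⁿ → X an m-homogeneous polynomial, and M its associated symmetric m-linear map. Then sup over unit vectors z^{(1)},...,z^{(m)} of ‖M(z^{(1)},...,z^{(m)})‖_X is at most e^m times sup over unit vectors z of ‖P(z)‖_X, and sup_{‖z‖≤1} ‖P(z)‖_X ≤ sup_{‖z^{(k)}‖≤1} ‖M(z^{(1)},...,z^{(m)})‖_X. -/
/-!
Expanding `M(w, …, w)` for `w = ∑ⱼ εⱼ vⱼ` by multilinearity and averaging against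
`ε₁ ⋯ εₘ` over all sign vectors kills every term `M(v ∘ r)` with `r` not a permutation
(flipping a sign outside the range of `r` changes the weight's sign), so the average is
`m! M(v)` by symmetry. Each `w` has norm at most `m`, so by homogeneity
`‖M(w, …, w)‖ ≤ mᵐ sup ‖P‖`; hence `‖M(v)‖ ≤ mᵐ / m! · sup ‖P‖ ≤ eᵐ sup ‖P‖`.
-/

open Finset Function

section Polarization

variable {R : Type*} [CommRing R]

def boolSign (b : Bool) : R := if b then 1 else -1

lemma boolSign_mul_self (b : Bool) : boolSign b * boolSign b = (1 : R) := by
  cases b <;> simp [boolSign]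

lemma boolSign_not (b : Bool) : boolSign (!b) = -(boolSign b : R) := by
  cases b <;> simp [boolSign]

variable {ι : Type*} [Fintype ι] [DecidableEq ι]

lemma sum_prod_boolSign_mul_prod_boolSign_comp_of_not_surjective {r : ι → ι}
    (hr : ¬ Surjective r) :
    ∑ ε : ι → Bool, (∏ i, boolSign (ε i) : R) * ∏ i, boolSign (ε (r i)) = 0 := by
  obtain ⟨j₀, hj₀⟩ : ∃ j₀, ∀ i, r i ≠ j₀ := by simpa [Surjective] using hr
  have prod_flip (ε : ι → Bool) :
      (∏ i, boolSign (update ε j₀ (!ε j₀) i) : R) = -∏ i, boolSign (ε i) := by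
    rw [Fintype.prod_eq_mul_prod_compl j₀, Fintype.prod_eq_mul_prod_compl j₀, update_self,
      boolSign_not, neg_mul]
    congr 2
    exact prod_congr rfl fun i hi => by rw [update_of_ne (by simpa using hi)]
  have prod_comp_flip (ε : ι → Bool) :
      (∏ i, boolSign (update ε j₀ (!ε j₀) (r i)) : R) = ∏ i, boolSign (ε (r i)) :=
    prod_congr rfl fun i _ => by rw [update_of_ne (hj₀ i)]
  refine sum_involution (fun ε _ => update ε j₀ (!ε j₀)) (fun ε _ => ?_)
    (fun ε _ _ h => ?_) (fun ε _ => mem_univ _) (fun ε _ => ?_)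
  · rw [prod_flip, prod_comp_flip, neg_mul, add_neg_cancel]
  · simpa using congrFun h j₀
  · simp

lemma sum_prod_boolSign_mul_prod_boolSign_comp_perm (σ : Equiv.Perm ι) :
    ∑ ε : ι → Bool, (∏ i, boolSign (ε i) : R) * ∏ i, boolSign (ε (σ i)) =
      2 ^ Fintype.card ι := by
  have h (ε : ι → Bool) : (∏ i, boolSign (ε i) : R) * ∏ i, boolSign (ε (σ i)) = 1 := by
    rw [Equiv.prod_comp σ fun i => (boolSign (ε i) : R), ← prod_mul_distrib]
    simp [boolSign_mul_self]
  simp [h]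

theorem MultilinearMap.sum_prod_boolSign_smul_map_diag {E X : Type*} [AddCommGroup E]
    [Module R E] [AddCommGroup X] [Module R X] {m : ℕ}
    (M : MultilinearMap R (fun _ : Fin m => E) X)
    (hsym : ∀ (σ : Equiv.Perm (Fin m)) (v : Fin m → E), M (v ∘ σ) = M v) (v : Fin m → E) :
    ∑ ε : Fin m → Bool,
        (∏ i, boolSign (ε i) : R) • M (fun _ => ∑ j, (boolSign (ε j) : R) • v j) =
      (2 ^ m * m.factorial) • M v := by
  calc _ = ∑ r : Fin m → Fin m,
          (∑ ε : Fin m → Bool, (∏ i, boolSign (ε i) : R) * ∏ i, boolSign (ε (r i))) •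
            M (v ∘ r) := by
        simp_rw [M.map_sum, comp_def, M.map_smul_univ, smul_sum, smul_smul]
        rw [sum_comm]
        simp_rw [sum_smul]
    _ = ∑ _σ : Equiv.Perm (Fin m), (2 ^ m : R) • M v := by
        refine (Fintype.sum_of_injective _ DFunLike.coe_injective _ _ (fun r hr => ?_)
          (fun σ => ?_)).symm
        · have hr' : ¬ Surjective r := fun hs =>
            hr ⟨Equiv.ofBijective r hs.bijective_of_finite, rfl⟩
          rw [sum_prod_boolSign_mul_prod_boolSign_comp_of_not_surjective hr', zero_smul]
        · rw [sum_prod_boolSign_mul_prod_boolSign_comp_perm, hsym, Fintype.card_fin]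
    _ = (2 ^ m * m.factorial) • M v := by
        rw [sum_const, card_univ, Fintype.card_perm, Fintype.card_fin, mul_comm, mul_smul,
          ← Nat.cast_smul_eq_nsmul R (2 ^ m), Nat.cast_pow, Nat.cast_ofNat]

end Polarization

lemma norm_boolSign {𝕜 : Type*} [NormedCommRing 𝕜] [NormOneClass 𝕜] (b : Bool) :
    ‖(boolSign b : 𝕜)‖ = 1 := by
  cases b <;> simp [boolSign]

section Estimates

variable {𝕜 E X : Type*} [RCLike 𝕜] [AddCommGroup E] [Module 𝕜 E]
  [NormedAddCommGroup X] [NormedSpace 𝕜 X] {m : ℕ}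
  {M : MultilinearMap 𝕜 (fun _ : Fin m => E) X} {p : Seminorm 𝕜 E} {C : ℝ}

lemma norm_map_diag_le_of_seminorm_le (hP : ∀ z, p z ≤ 1 → ‖M (fun _ => z)‖ ≤ C)
    {r : ℝ} (hr : 0 < r) {w : E} (hw : p w ≤ r) : ‖M (fun _ => w)‖ ≤ r ^ m * C := by
  set u : E := (r⁻¹ : 𝕜) • w
  have hpu : p u ≤ 1 := by
    rw [map_smul_eq_mul, norm_inv, RCLike.norm_ofReal, abs_of_pos hr, inv_mul_le_iff₀ hr,
      mul_one]
    exact hw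
  have hwu : M (fun _ => w) = (r : 𝕜) ^ m • M (fun _ => u) := by
    have : w = (r : 𝕜) • u := by
      rw [smul_smul, mul_inv_cancel₀ (by exact_mod_cast hr.ne'), one_smul]
    rw [this, M.map_smul_univ (fun _ => (r : 𝕜)) (fun _ => u), prod_const, card_univ,
      Fintype.card_fin]
  rw [hwu, norm_smul, norm_pow, RCLike.norm_ofReal, abs_of_pos hr]
  gcongr
  exact hP u hpu

lemma seminorm_sum_boolSign_smul_le {ι : Type*} [Fintype ι] {v : ι → E}
    (hv : ∀ i, p (v i) ≤ 1) (ε : ι → Bool) :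
    p (∑ j, (boolSign (ε j) : 𝕜) • v j) ≤ Fintype.card ι := by
  calc _ ≤ ∑ j, p ((boolSign (ε j) : 𝕜) • v j) :=
        le_sum_of_subadditive p (map_zero p).le (map_add_le_add p) _ _
    _ ≤ ∑ _j : ι, (1 : ℝ) := sum_le_sum fun j _ => by
        rw [map_smul_eq_mul, norm_boolSign, one_mul]
        exact hv j
    _ = Fintype.card ι := by simp

theorem MultilinearMap.norm_le_pow_div_factorial_mul
    (hsym : ∀ (σ : Equiv.Perm (Fin m)) (v : Fin m → E), M (v ∘ σ) = M v)
    (hm : 0 < m) (hP : ∀ z, p z ≤ 1 → ‖M (fun _ => z)‖ ≤ C) {v : Fin m → E}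
    (hv : ∀ i, p (v i) ≤ 1) :
    ‖M v‖ ≤ (m : ℝ) ^ m / m.factorial * C := by
  have hdiag (ε : Fin m → Bool) :
      ‖M (fun _ => ∑ j, (boolSign (ε j) : 𝕜) • v j)‖ ≤ (m : ℝ) ^ m * C :=
    norm_map_diag_le_of_seminorm_le hP (by exact_mod_cast hm)
      (by simpa using seminorm_sum_boolSign_smul_le hv ε)
  have hpolar : (2 ^ m * m.factorial : ℝ) * ‖M v‖ ≤ 2 ^ m * ((m : ℝ) ^ m * C) :=
    calc (2 ^ m * m.factorial : ℝ) * ‖M v‖ = ‖(2 ^ m * m.factorial) • M v‖ := by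
          rw [RCLike.norm_nsmul 𝕜, nsmul_eq_mul]; norm_cast
      _ ≤ ∑ ε : Fin m → Bool,
            ‖(∏ i, boolSign (ε i) : 𝕜) • M (fun _ => ∑ j, (boolSign (ε j) : 𝕜) • v j)‖ := by
          rw [← M.sum_prod_boolSign_smul_map_diag hsym]
          exact norm_sum_le _ _
      _ ≤ ∑ _ε : Fin m → Bool, (m : ℝ) ^ m * C := sum_le_sum fun ε _ => by
          rw [norm_smul, norm_prod]
          simpa [norm_boolSign] using hdiag ε
      _ = 2 ^ m * ((m : ℝ) ^ m * C) := by simp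
  rw [mul_assoc, mul_le_mul_iff_right₀ (by positivity)] at hpolar
  rw [div_mul_eq_mul_div, le_div_iff₀ (by positivity)]
  linarith

end Estimates

theorem stmt_10_general {X : Type*} [NormedAddCommGroup X] [NormedSpace ℂ X]
    (n m : ℕ) (hm : 0 < m)
    (M : MultilinearMap ℂ (fun _ : Fin m => (Fin n → ℂ)) X)
    (hsym : ∀ (σ : Equiv.Perm (Fin m)) (v : Fin m → (Fin n → ℂ)), M (v ∘ σ) = M v)
    (N : (Fin n → ℂ) → ℝ)
    (hadd : ∀ y z, N (y + z) ≤ N y + N z)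
    (hsmul : ∀ (a : ℂ) z, N (a • z) = ‖a‖ * N z) :
    (∀ C : ℝ, (∀ v : Fin m → (Fin n → ℂ), (∀ i, N (v i) ≤ 1) → ‖M v‖ ≤ C) →
        ∀ z, N z ≤ 1 → ‖M (fun _ => z)‖ ≤ C) ∧
      (∀ C : ℝ, 0 ≤ C → (∀ z, N z ≤ 1 → ‖M (fun _ => z)‖ ≤ C) →
        ∀ v : Fin m → (Fin n → ℂ), (∀ i, N (v i) ≤ 1) →
          ‖M v‖ ≤ Real.exp 1 ^ m * C) := by
  refine ⟨fun C hM z hz => hM (fun _ => z) fun _ => hz, fun C hC hP v hv => ?_⟩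
  let p : Seminorm ℂ (Fin n → ℂ) := Seminorm.of N hadd hsmul
  calc ‖M v‖ ≤ (m : ℝ) ^ m / m.factorial * C :=
        M.norm_le_pow_div_factorial_mul (p := p) hsym hm hP hv
    _ ≤ Real.exp 1 ^ m * C := by
        gcongr
        rw [← Real.exp_nat_mul, mul_one]
        exact Real.pow_div_factorial_le_exp m (Nat.cast_nonneg m) m

/-- Comparison between the sup of an `m`-homogeneous polynomial `P(z) = M(z,…,z)`
and its associated symmetric `m`-linear map `M` over the unit ball of an
arbitrary norm `N` on `ℂⁿ`: `sup P ≤ sup M ≤ eᵐ sup P`, phrased via upper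
bounds. -/
theorem stmt_10 {X : Type*} [NormedAddCommGroup X] [NormedSpace ℂ X]
    (n m : ℕ) (hm : 0 < m)
    (M : MultilinearMap ℂ (fun _ : Fin m => (Fin n → ℂ)) X)
    (hsym : ∀ (σ : Equiv.Perm (Fin m)) (v : Fin m → (Fin n → ℂ)), M (v ∘ σ) = M v)
    (N : (Fin n → ℂ) → ℝ)
    (hadd : ∀ y z, N (y + z) ≤ N y + N z)
    (hsmul : ∀ (a : ℂ) z, N (a • z) = ‖a‖ * N z)
    (hpos : ∀ z, z ≠ 0 → 0 < N z) :
    (∀ C : ℝ, (∀ v : Fin m → (Fin n → ℂ), (∀ i, N (v i) ≤ 1) → ‖M v‖ ≤ C) →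
        ∀ z, N z ≤ 1 → ‖M (fun _ => z)‖ ≤ C) ∧
      (∀ C : ℝ, 0 ≤ C → (∀ z, N z ≤ 1 → ‖M (fun _ => z)‖ ≤ C) →
        ∀ v : Fin m → (Fin n → ℂ), (∀ i, N (v i) ≤ 1) →
          ‖M v‖ ≤ Real.exp 1 ^ m * C) :=
  stmt_10_general n m hm M hsym N hadd hsmul
end

section
/- Let X be a Banach space, Φ : X → ℝ_{≥0} a convex function with Φ(x) = Φ(−x) for all x, P : ℂⁿ → X an m-homogeneous tetrahedral polynomial with n = km, and ξ a random vector of n independent symmetric random variables with iid copies ξ^{(1)},...,ξ^{(m)}. Then E Φ((k^m / C(km,m)) P(ξ)) ≤ (1/|Π_{k,m}|) ∑_{π ∈ Π_{k,m}} E Φ(L_π(ξ^{(1)},...,ξ^{(m)})) ≤ E Φ(P(ξ)). -/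
open Finset MeasureTheory ProbabilityTheory

open scoped Pointwise

lemma ConvexOn.map_inv_card_smul_sum_le {ι E : Type*} [AddCommGroup E] [Module ℝ E]
    {Φ : E → ℝ} (hΦ : ConvexOn ℝ Set.univ Φ) {s : Finset ι} (hs : s.Nonempty) (v : ι → E) :
    Φ ((#s : ℝ)⁻¹ • ∑ i ∈ s, v i) ≤ (#s : ℝ)⁻¹ * ∑ i ∈ s, Φ (v i) := by
  have hw : ∑ _i ∈ s, (#s : ℝ)⁻¹ = 1 := by
    rw [sum_const, nsmul_eq_mul, mul_inv_cancel₀ (Nat.cast_ne_zero.2 hs.card_pos.ne')]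
  simpa [smul_sum, mul_sum] using
    hΦ.map_sum_le (fun _ _ => by positivity) hw fun i _ => Set.mem_univ (v i)

lemma ProbabilityTheory.iIndepFun.identDistrib_pi {Ω ι β : Type*} [MeasurableSpace Ω]
    {μ : Measure Ω} [Fintype ι] [MeasurableSpace β] {f g : ι → Ω → β}
    (hfi : iIndepFun f μ) (hgi : iIndepFun g μ) (hf : ∀ i, Measurable (f i))
    (hg : ∀ i, Measurable (g i)) (hfg : ∀ i, μ.map (f i) = μ.map (g i)) :
    IdentDistrib (fun ω i => f i ω) (fun ω i => g i ω) μ μ where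
  aemeasurable_fst := (measurable_pi_lambda _ hf).aemeasurable
  aemeasurable_snd := (measurable_pi_lambda _ hg).aemeasurable
  map_eq := by
    rw [hfi.map_fun_eq_pi_map fun i => (hf i).aemeasurable,
      hgi.map_fun_eq_pi_map fun i => (hg i).aemeasurable]
    simp_rw [hfg]

namespace Decoupling

variable {k m : ℕ} {π : Fin m → Finset (Fin (k * m))}

lemma mem_orderedPartitions :
    π ∈ orderedPartitions k m ↔ (∀ l, #(π l) = k) ∧
      (∀ l l', l ≠ l' → Disjoint (π l) (π l')) ∧ univ.biUnion π = univ := by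
  simp [orderedPartitions]

lemma orderedPartitions_nonempty : (orderedPartitions k m).Nonempty := by
  let e : Fin k × Fin m ≃ Fin (k * m) := finProdFinEquiv
  refine ⟨fun l => univ.map ((Function.Embedding.sectL (Fin k) l).trans e.toEmbedding),
    mem_orderedPartitions.2 ⟨fun l => by simp, fun l l' hne => ?_, ?_⟩⟩
  · simp only [disjoint_left, mem_map, mem_univ, true_and, forall_exists_index,
      forall_apply_eq_imp_iff, not_exists]
    intro i i' h
    exact hne (congrArg Prod.snd (e.injective h)).symm
  · ext j
    simpa using ⟨(e.symm j).2, (e.symm j).1, e.apply_symm_apply j⟩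

section block

variable (hπ : π ∈ orderedPartitions k m)
include hπ

lemma existsUnique_mem (j : Fin (k * m)) : ∃! l, j ∈ π l := by
  obtain ⟨-, hdisj, hcover⟩ := mem_orderedPartitions.1 hπ
  obtain ⟨l, -, hl⟩ := mem_biUnion.1 (hcover ▸ mem_univ j)
  exact ⟨l, hl, fun l' hl' => by_contra fun hne => disjoint_left.1 (hdisj l' l hne) hl' hl⟩

def block (j : Fin (k * m)) : Fin m :=
  Fintype.choose _ (existsUnique_mem hπ j)

lemma mem_block (j : Fin (k * m)) : j ∈ π (block hπ j) :=
  Fintype.choose_spec _ (existsUnique_mem hπ j)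

lemma block_eq_of_mem {j : Fin (k * m)} {l : Fin m} (hj : j ∈ π l) : block hπ j = l :=
  (existsUnique_mem hπ j).unique (mem_block hπ j) hj

lemma filter_block_eq (A : Finset (Fin (k * m))) (l : Fin m) :
    A.filter (block hπ · = l) = A ∩ π l := by
  ext j
  simp only [mem_filter, mem_inter]
  exact and_congr_right fun _ => ⟨fun h => h ▸ mem_block hπ j, block_eq_of_mem hπ⟩

lemma sum_card_inter (A : Finset (Fin (k * m))) : ∑ l, #(A ∩ π l) = #A := by
  simp_rw [← filter_block_eq hπ A]
  exact card_eq_sum_card_fiberwise (fun _ _ => mem_univ _) |>.symm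

lemma injective_of_mem_piFinset {i : Fin m → Fin (k * m)}
    (hi : i ∈ Fintype.piFinset π) : Function.Injective i := fun l l' h => by
  rw [← block_eq_of_mem hπ (Fintype.mem_piFinset.1 hi l), h,
    block_eq_of_mem hπ (Fintype.mem_piFinset.1 hi l')]

lemma image_inter_eq_singleton {i : Fin m → Fin (k * m)} (hi : i ∈ Fintype.piFinset π)
    (l : Fin m) : univ.image i ∩ π l = {i l} := by
  ext j
  simp only [mem_inter, mem_image, mem_univ, true_and, mem_singleton]
  constructor
  · rintro ⟨⟨l', rfl⟩, hj⟩
    rw [← block_eq_of_mem hπ hj, block_eq_of_mem hπ (Fintype.mem_piFinset.1 hi l')]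
  · rintro rfl
    exact ⟨⟨l, rfl⟩, Fintype.mem_piFinset.1 hi l⟩

end block

def IsTransversal (π : Fin m → Finset (Fin (k * m))) (A : Finset (Fin (k * m))) : Prop :=
  ∀ l, #(A ∩ π l) = 1

instance : DecidablePred (IsTransversal π) := fun _ =>
  inferInstanceAs (Decidable (∀ _, _))

lemma IsTransversal.card {A : Finset (Fin (k * m))} (hπ : π ∈ orderedPartitions k m)
    (hA : IsTransversal π A) : #A = m := by
  simp [← sum_card_inter hπ A, hA _]

lemma isTransversal_of_forall_odd {A : Finset (Fin (k * m))} (hπ : π ∈ orderedPartitions k m)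
    (hA : #A = m) (hodd : ∀ l, Odd #(A ∩ π l)) : IsTransversal π A := by
  have hsum : ∑ _l : Fin m, 1 = ∑ l, #(A ∩ π l) := by simp [sum_card_inter hπ A, hA]
  intro l
  exact ((sum_eq_sum_iff_of_le fun l _ => (hodd l).pos).1 hsum l (mem_univ l)).symm

lemma filter_card_filter_isTransversal (hπ : π ∈ orderedPartitions k m) :
    (univ.filter fun A : Finset (Fin (k * m)) => #A = m).filter (IsTransversal π) =
      univ.filter (IsTransversal π) := by
  ext A
  simpa using fun hA => hA.card hπ

lemma sum_piFinset_eq_sum_transversal {M : Type*} [AddCommMonoid M]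
    (hπ : π ∈ orderedPartitions k m) (F : Finset (Fin (k * m)) → M) :
    ∑ i ∈ Fintype.piFinset π, F (univ.image i) = ∑ A ∈ univ.filter (IsTransversal π), F A := by
  refine sum_nbij (univ.image ·) (fun i hi => ?_) (fun i hi i' hi' h => ?_) (fun A hA => ?_)
    (fun _ _ => rfl)
  · exact mem_filter.2 ⟨mem_univ _, fun l => by rw [image_inter_eq_singleton hπ hi, card_singleton]⟩
  · have h : univ.image i = univ.image i' := h
    funext l
    have := image_inter_eq_singleton hπ hi' l
    rwa [← h, image_inter_eq_singleton hπ hi, singleton_inj] at this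
  · have hA : ∀ l, ∃ j, A ∩ π l = {j} := fun l => card_eq_one.1 ((mem_filter.1 hA).2 l)
    choose i hi using hA
    have hmem : ∀ l, i l ∈ A ∩ π l := fun l => hi l ▸ mem_singleton_self _
    have hpi : i ∈ Fintype.piFinset π := Fintype.mem_piFinset.2 fun l => (mem_inter.1 (hmem l)).2
    refine ⟨i, hpi, ?_⟩
    show univ.image i = A
    ext j
    simp only [mem_image, mem_univ, true_and]
    refine ⟨fun ⟨l, hl⟩ => hl ▸ (mem_inter.1 (hmem l)).1, fun hj => ?_⟩
    refine ⟨block hπ j, ?_⟩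
    have : j ∈ A ∩ π (block hπ j) := mem_inter.2 ⟨hj, mem_block hπ j⟩
    rw [hi] at this
    exact (mem_singleton.1 this).symm

lemma card_transversals (hπ : π ∈ orderedPartitions k m) :
    #(univ.filter (IsTransversal π)) = k ^ m := by
  have := sum_piFinset_eq_sum_transversal hπ fun _ => 1
  simp only [sum_const, smul_eq_mul, mul_one, Fintype.card_piFinset] at this
  rw [← this]
  simp [(mem_orderedPartitions.1 hπ).1]

lemma smul_mem_orderedPartitions (σ : Equiv.Perm (Fin (k * m)))
    (hπ : π ∈ orderedPartitions k m) : σ • π ∈ orderedPartitions k m := by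
  obtain ⟨hcard, hdisj, hcover⟩ := mem_orderedPartitions.1 hπ
  refine mem_orderedPartitions.2 ⟨fun l => ?_, fun l l' hne => ?_, ?_⟩
  · simp [Pi.smul_apply, card_smul_finset, hcard l]
  · simpa [← disjoint_coe, Set.disjoint_smul_set] using hdisj l l' hne
  · rw [eq_univ_iff_forall]
    intro j
    obtain ⟨l, -, hl⟩ := mem_biUnion.1 (hcover ▸ mem_univ (σ⁻¹ • j))
    exact mem_biUnion.2 ⟨l, mem_univ l, inv_smul_mem_iff.1 hl⟩

lemma IsTransversal.smul {A : Finset (Fin (k * m))} (σ : Equiv.Perm (Fin (k * m)))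
    (hA : IsTransversal π A) : IsTransversal (σ • π) (σ • A) := fun l => by
  rw [Pi.smul_apply, ← smul_finset_inter, card_smul_finset, hA l]

def transversalCount (k m : ℕ) (A : Finset (Fin (k * m))) : ℕ :=
  #((orderedPartitions k m).filter (IsTransversal · A))

lemma transversalCount_smul (σ : Equiv.Perm (Fin (k * m))) (A : Finset (Fin (k * m))) :
    transversalCount k m (σ • A) = transversalCount k m A := by
  refine card_nbij' (σ⁻¹ • ·) (σ • ·) (fun π hπ => ?_) (fun π hπ => ?_)
    (fun π _ => smul_inv_smul σ π) (fun π _ => inv_smul_smul σ π)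
  · obtain ⟨hπ, hA⟩ := mem_filter.1 hπ
    refine mem_filter.2 ⟨smul_mem_orderedPartitions _ hπ, ?_⟩
    simpa using hA.smul σ⁻¹
  · obtain ⟨hπ, hA⟩ := mem_filter.1 hπ
    exact mem_filter.2 ⟨smul_mem_orderedPartitions _ hπ, hA.smul σ⟩

lemma transversalCount_eq_of_card_eq {A A' : Finset (Fin (k * m))} (h : #A = #A') :
    transversalCount k m A = transversalCount k m A' := by
  obtain ⟨σ, hσ⟩ := (Set.powersetCard.isPretransitive (α := Fin (k * m)) (n := #A')).exists_smul_eq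
    ⟨A, h⟩ ⟨A', rfl⟩
  rw [← transversalCount_smul σ A]
  exact congrArg _ (congrArg Subtype.val hσ)

lemma sum_transversalCount :
    ∑ A ∈ univ.filter (fun A : Finset (Fin (k * m)) => #A = m), transversalCount k m A
      = #(orderedPartitions k m) * k ^ m := by
  calc _ = ∑ π ∈ orderedPartitions k m,
        #((univ.filter fun A : Finset (Fin (k * m)) => #A = m).bipartiteAbove IsTransversal π) :=
        (sum_card_bipartiteAbove_eq_sum_card_bipartiteBelow _).symm
    _ = ∑ _π ∈ orderedPartitions k m, k ^ m := sum_congr rfl fun π hπ => by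
        rw [bipartiteAbove, filter_card_filter_isTransversal hπ, card_transversals hπ]
    _ = _ := by rw [sum_const, smul_eq_mul]

lemma transversalCount_mul_choose {A : Finset (Fin (k * m))} (hA : #A = m) :
    transversalCount k m A * (k * m).choose m = #(orderedPartitions k m) * k ^ m := by
  rw [← sum_transversalCount, sum_congr rfl fun A' hA' =>
    transversalCount_eq_of_card_eq ((mem_filter.1 hA').2.trans hA.symm), sum_const,
    univ_filter_card_eq, card_powersetCard, card_univ, Fintype.card_fin, smul_eq_mul, mul_comm]

section forms

variable {R X : Type*} [CommRing R] [AddCommGroup X] [Module R X] (x : Finset (Fin (k * m)) → X)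

def tetrahedralPoly (z : Fin (k * m) → R) : X :=
  ∑ A ∈ univ.filter (fun A : Finset (Fin (k * m)) => #A = m), (∏ j ∈ A, z j) • x A

-- `L_π(z 0, …, z (m - 1))`: the `l`-th argument is read only on the block `π l`.
def partitionForm (π : Fin m → Finset (Fin (k * m))) (z : Fin m → Fin (k * m) → R) : X :=
  ∑ i ∈ Fintype.piFinset π, (∏ l, z l (i l)) • x (univ.image i)

variable (hπ : π ∈ orderedPartitions k m)
include hπ

lemma partitionForm_eq_block (z : Fin m → Fin (k * m) → R) :
    partitionForm x π z = partitionForm x π (fun _ j => z (block hπ j) j) :=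
  sum_congr rfl fun i hi => by
    simp_rw [block_eq_of_mem hπ (Fintype.mem_piFinset.1 hi _)]

lemma partitionForm_const (z : Fin (k * m) → R) :
    partitionForm x π (fun _ => z) =
      ∑ A ∈ univ.filter (IsTransversal π), (∏ j ∈ A, z j) • x A := by
  rw [← sum_piFinset_eq_sum_transversal hπ]
  exact sum_congr rfl fun i hi => by
    rw [prod_image fun l _ l' _ h => injective_of_mem_piFinset hπ hi h]

omit hπ

lemma sum_partitionForm_const (z : Fin (k * m) → R) :
    ∑ π ∈ orderedPartitions k m, partitionForm x π (fun _ => z) =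
      ∑ A ∈ univ.filter (fun A : Finset (Fin (k * m)) => #A = m),
        transversalCount k m A • (∏ j ∈ A, z j) • x A := by
  calc ∑ π ∈ orderedPartitions k m, partitionForm x π (fun _ => z)
      = ∑ π ∈ orderedPartitions k m, ∑ A ∈ univ.filter (fun A : Finset (Fin (k * m)) => #A = m),
          if IsTransversal π A then (∏ j ∈ A, z j) • x A else 0 := by
        refine sum_congr rfl fun π hπ => ?_
        rw [partitionForm_const x hπ, ← filter_card_filter_isTransversal hπ, sum_filter]
    _ = _ := by
        rw [sum_comm]
        refine sum_congr rfl fun A _ => ?_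
        rw [← sum_filter, sum_const]
        rfl

lemma smul_tetrahedralPoly_eq_avg {𝕜 : Type*} [Field 𝕜] [CharZero 𝕜] [Module 𝕜 X]
    (z : Fin (k * m) → 𝕜) :
    (((k : 𝕜) ^ m) / (((k * m).choose m : ℕ) : 𝕜)) • tetrahedralPoly x z =
      ((#(orderedPartitions k m) : 𝕜))⁻¹ •
        ∑ π ∈ orderedPartitions k m, partitionForm x π (fun _ => z) := by
  rw [sum_partitionForm_const, tetrahedralPoly, smul_sum, smul_sum]
  refine sum_congr rfl fun A hA => ?_
  have hA : #A = m := (mem_filter.1 hA).2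
  have hchoose : ((k * m).choose m : 𝕜) ≠ 0 := Nat.cast_ne_zero.2 (Nat.choose_pos <| by
    simpa [hA] using card_le_univ A).ne'
  have hcard : (#(orderedPartitions k m) : 𝕜) ≠ 0 :=
    Nat.cast_ne_zero.2 orderedPartitions_nonempty.card_pos.ne'
  have hcount : (transversalCount k m A : 𝕜) * (k * m).choose m =
      #(orderedPartitions k m) * k ^ m := by
    exact_mod_cast transversalCount_mul_choose hA
  have hcoeff : (k : 𝕜) ^ m / ((k * m).choose m : ℕ) =
      (#(orderedPartitions k m) : 𝕜)⁻¹ * transversalCount k m A := by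
    field_simp
    linear_combination -hcount
  rw [hcoeff, ← smul_smul, Nat.cast_smul_eq_nsmul]

end forms

section signs

variable {R X : Type*} [CommRing R] [AddCommGroup X] [Module R X] (x : Finset (Fin (k * m)) → X)

def boolSign (b : Bool) : R := if b then 1 else -1

lemma prod_boolSign_eq_one_or {ι : Type*} (s : Finset ι) (ε : ι → Bool) :
    ∏ l ∈ s, (boolSign (ε l) : R) = 1 ∨ ∏ l ∈ s, (boolSign (ε l) : R) = -1 :=
  prod_induction _ (fun r => r = 1 ∨ r = -1) (by rintro _ _ (rfl | rfl) (rfl | rfl) <;> simp)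
    (Or.inl rfl) fun l _ => by unfold boolSign; split_ifs <;> simp

lemma sum_boolSign_pow_succ (n : ℕ) :
    ∑ b : Bool, (boolSign b : R) ^ (n + 1) = if Even n then 0 else 2 := by
  rcases Nat.even_or_odd n with h | h
  · simp [boolSign, h, h.add_one.neg_one_pow]
  · simp [boolSign, Nat.not_even_iff_odd.2 h, h.add_one.neg_one_pow, one_add_one_eq_two]

variable (hπ : π ∈ orderedPartitions k m)
include hπ

lemma sum_prod_boolSign {A : Finset (Fin (k * m))} (hA : #A = m) :
    ∑ ε : Fin m → Bool, (∏ l, (boolSign (ε l) : R)) * ∏ j ∈ A, boolSign (ε (block hπ j)) =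
      if IsTransversal π A then 2 ^ m else 0 := by
  have hfactor : ∀ ε : Fin m → Bool,
      (∏ l, (boolSign (ε l) : R)) * ∏ j ∈ A, boolSign (ε (block hπ j)) =
        ∏ l, (boolSign (ε l) : R) ^ (#(A ∩ π l) + 1) := fun ε => by
    rw [← prod_fiberwise' A (block hπ) (fun l => boolSign (ε l)), ← prod_mul_distrib]
    refine prod_congr rfl fun l _ => ?_
    rw [prod_const, filter_block_eq hπ, pow_succ']
  simp_rw [hfactor]
  rw [← Fintype.prod_sum (fun l b => (boolSign b : R) ^ (#(A ∩ π l) + 1))]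
  simp_rw [sum_boolSign_pow_succ]
  split_ifs with hT
  · simp [hT _]
  · obtain ⟨l, hl⟩ : ∃ l, Even #(A ∩ π l) := by
      by_contra! h
      exact hT (isTransversal_of_forall_odd hπ hA fun l => Nat.not_even_iff_odd.1 (h l))
    exact prod_eq_zero (mem_univ l) (if_pos hl)

lemma sum_boolSign_smul_tetrahedralPoly (z : Fin (k * m) → R) :
    ∑ ε : Fin m → Bool, (∏ l, (boolSign (ε l) : R)) •
        tetrahedralPoly x (fun j => boolSign (ε (block hπ j)) * z j) =
      (2 : R) ^ m • partitionForm x π (fun _ => z) := by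
  rw [partitionForm_const x hπ, ← filter_card_filter_isTransversal hπ, sum_filter, smul_sum]
  simp_rw [tetrahedralPoly, smul_sum]
  rw [sum_comm]
  refine sum_congr rfl fun A hA => ?_
  simp_rw [prod_mul_distrib, ← smul_smul, smul_smul (∏ l, (boolSign _ : R))]
  rw [← sum_smul, sum_prod_boolSign hπ (mem_filter.1 hA).2]
  split_ifs <;> simp

end signs

section pointwise

variable {X : Type*} [AddCommGroup X] [Module ℂ X] (x : Finset (Fin (k * m)) → X) {Φ : X → ℝ}

lemma map_smul_tetrahedralPoly_le (hΦ : ConvexOn ℝ Set.univ Φ) (z : Fin (k * m) → ℂ) :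
    Φ ((((k : ℂ) ^ m) / (((k * m).choose m : ℕ) : ℂ)) • tetrahedralPoly x z) ≤
      (#(orderedPartitions k m) : ℝ)⁻¹ *
        ∑ π ∈ orderedPartitions k m, Φ (partitionForm x π fun _ => z) := by
  rw [smul_tetrahedralPoly_eq_avg, inv_natCast_smul_eq ℂ ℝ]
  exact hΦ.map_inv_card_smul_sum_le orderedPartitions_nonempty _

lemma map_partitionForm_le (hΦ : ConvexOn ℝ Set.univ Φ) (heven : ∀ y, Φ (-y) = Φ y)
    (hπ : π ∈ orderedPartitions k m) (z : Fin (k * m) → ℂ) :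
    Φ (partitionForm x π fun _ => z) ≤ (2 ^ m : ℝ)⁻¹ *
      ∑ ε : Fin m → Bool, Φ (tetrahedralPoly x fun j => boolSign (ε (block hπ j)) * z j) := by
  have hcard : (#(univ : Finset (Fin m → Bool)) : ℝ) = 2 ^ m := by simp
  have hsign : ∀ (c : ℂ) (v : X), (c = 1 ∨ c = -1) → Φ (c • v) = Φ v := by
    rintro c v (rfl | rfl) <;> simp [heven]
  calc Φ (partitionForm x π fun _ => z)
      = Φ ((#(univ : Finset (Fin m → Bool)) : ℝ)⁻¹ • ∑ ε : Fin m → Bool,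
          (∏ l, (boolSign (ε l) : ℂ)) •
            tetrahedralPoly x fun j => boolSign (ε (block hπ j)) * z j) := by
        rw [sum_boolSign_smul_tetrahedralPoly x hπ, inv_natCast_smul_eq ℝ ℂ, smul_smul]
        simp
    _ ≤ _ := hΦ.map_inv_card_smul_sum_le univ_nonempty _
    _ = _ := by
        rw [hcard]
        congr 1
        exact sum_congr rfl fun ε _ => hsign _ _ (prod_boolSign_eq_one_or _ _)

end pointwise

section probability

variable {Ω : Type*} [MeasurableSpace Ω] {μ : Measure Ω}

lemma identDistrib_copy_choice {L J β : Type*} [Fintype J] [MeasurableSpace β]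
    {η : L → J → Ω → β} (hmeas : ∀ l j, Measurable (η l j))
    (hindep : iIndepFun (fun q : L × J => η q.1 q.2) μ)
    (hid : ∀ l l' j, μ.map (η l j) = μ.map (η l' j)) (b c : J → L) :
    IdentDistrib (fun ω j => η (b j) j ω) (fun ω j => η (c j) j ω) μ μ :=
  (hindep.precomp (g := fun j => (b j, j)) fun _ _ h => congrArg Prod.snd h).identDistrib_pi
    (hindep.precomp (g := fun j => (c j, j)) fun _ _ h => congrArg Prod.snd h)
    (fun _ => hmeas _ _) (fun _ => hmeas _ _) fun _ => hid _ _ _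

lemma identDistrib_boolSign_mul {J R : Type*} [Fintype J] [CommRing R] [MeasurableSpace R]
    [MeasurableMul R] {ξ : J → Ω → R} (hmeas : ∀ j, Measurable (ξ j)) (hindep : iIndepFun ξ μ)
    (hsymm : ∀ j, μ.map (ξ j) = μ.map (fun ω => -ξ j ω)) (b : J → Bool) :
    IdentDistrib (fun ω j => boolSign (b j) * ξ j ω) (fun ω j => ξ j ω) μ μ :=
  (hindep.comp (fun j t => boolSign (b j) * t) fun _ => measurable_const_mul _).identDistrib_pi
    hindep (fun j => (hmeas j).const_mul _) hmeas fun j => by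
      unfold boolSign
      split_ifs
      · simp [Function.comp_def]
      · simp [Function.comp_def, hsymm j]

variable {X : Type*} [NormedAddCommGroup X] [NormedSpace ℂ X] (x : Finset (Fin (k * m)) → X)
  {Φ : X → ℝ}

lemma continuous_tetrahedralPoly : Continuous (tetrahedralPoly x : (Fin (k * m) → ℂ) → X) := by
  unfold tetrahedralPoly
  fun_prop

lemma continuous_partitionForm_const (π : Fin m → Finset (Fin (k * m))) :
    Continuous fun z : Fin (k * m) → ℂ => partitionForm x π fun _ => z := by
  unfold partitionForm
  fun_prop

variable {η : Fin m → Fin (k * m) → Ω → ℂ} (hΦ : Continuous Φ) (hmeas : ∀ l j, Measurable (η l j))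
  (hindep : iIndepFun (fun q : Fin m × Fin (k * m) => η q.1 q.2) μ)
include hΦ hmeas hindep

lemma identDistrib_map_partitionForm (hid : ∀ l l' j, μ.map (η l j) = μ.map (η l' j))
    (hπ : π ∈ orderedPartitions k m) (l₀ : Fin m) :
    IdentDistrib (fun ω => Φ (partitionForm x π fun l j => η l j ω))
      (fun ω => Φ (partitionForm x π fun _ j => η l₀ j ω)) μ μ := by
  convert (identDistrib_copy_choice hmeas hindep hid (block hπ) fun _ => l₀).comp
    (hΦ.comp (continuous_partitionForm_const x π)).measurable using 1
  · funext ω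
    exact congrArg Φ (partitionForm_eq_block x hπ _)
  · rfl

lemma identDistrib_map_tetrahedralPoly_boolSign
    (hsymm : ∀ l j, μ.map (η l j) = μ.map (fun ω => -η l j ω)) (l₀ : Fin m)
    (b : Fin (k * m) → Bool) :
    IdentDistrib (fun ω => Φ (tetrahedralPoly x fun j => boolSign (b j) * η l₀ j ω))
      (fun ω => Φ (tetrahedralPoly x fun j => η l₀ j ω)) μ μ :=
  (identDistrib_boolSign_mul (hmeas l₀)
    (hindep.precomp (g := fun j => (l₀, j)) fun _ _ h => congrArg Prod.snd h) (hsymm l₀) b).comp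
    (hΦ.comp (continuous_tetrahedralPoly x)).measurable

theorem integral_map_smul_tetrahedralPoly_le (hconv : ConvexOn ℝ Set.univ Φ)
    (hnonneg : ∀ y, 0 ≤ Φ y) (hid : ∀ l l' j, μ.map (η l j) = μ.map (η l' j)) (l₀ : Fin m)
    (hintL : ∀ π ∈ orderedPartitions k m,
      Integrable (fun ω => Φ (partitionForm x π fun l j => η l j ω)) μ) :
    ∫ ω, Φ ((((k : ℂ) ^ m) / (((k * m).choose m : ℕ) : ℂ)) •
        tetrahedralPoly x fun j => η l₀ j ω) ∂μ ≤
      (#(orderedPartitions k m) : ℝ)⁻¹ *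
        ∑ π ∈ orderedPartitions k m, ∫ ω, Φ (partitionForm x π fun l j => η l j ω) ∂μ := by
  have hL := fun π (hπ : π ∈ orderedPartitions k m) =>
    identDistrib_map_partitionForm x hΦ hmeas hindep hid hπ l₀
  have hint : ∀ π ∈ orderedPartitions k m,
      Integrable (fun ω => Φ (partitionForm x π fun _ j => η l₀ j ω)) μ :=
    fun π hπ => (hL π hπ).integrable_iff.1 (hintL π hπ)
  calc _ ≤ ∫ ω, (#(orderedPartitions k m) : ℝ)⁻¹ *
          ∑ π ∈ orderedPartitions k m, Φ (partitionForm x π fun _ j => η l₀ j ω) ∂μ :=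
        integral_mono_of_nonneg (.of_forall fun _ => hnonneg _)
          ((integrable_finsetSum _ hint).const_mul _)
          (.of_forall fun _ => map_smul_tetrahedralPoly_le x hconv _)
    _ = _ := by
        rw [integral_const_mul, integral_finsetSum _ hint]
        exact congrArg _ (sum_congr rfl fun π hπ => (hL π hπ).integral_eq.symm)

theorem integral_map_partitionForm_le (hconv : ConvexOn ℝ Set.univ Φ)
    (hnonneg : ∀ y, 0 ≤ Φ y) (heven : ∀ y, Φ (-y) = Φ y)
    (hid : ∀ l l' j, μ.map (η l j) = μ.map (η l' j))
    (hsymm : ∀ l j, μ.map (η l j) = μ.map (fun ω => -η l j ω)) (l₀ : Fin m)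
    (hintP : Integrable (fun ω => Φ (tetrahedralPoly x fun j => η l₀ j ω)) μ)
    (hπ : π ∈ orderedPartitions k m) :
    ∫ ω, Φ (partitionForm x π fun l j => η l j ω) ∂μ ≤
      ∫ ω, Φ (tetrahedralPoly x fun j => η l₀ j ω) ∂μ := by
  have hflip := fun ε : Fin m → Bool => identDistrib_map_tetrahedralPoly_boolSign x hΦ hmeas
    hindep hsymm l₀ fun j => ε (block hπ j)
  have hint := fun ε : Fin m → Bool => (hflip ε).integrable_iff.2 hintP
  rw [(identDistrib_map_partitionForm x hΦ hmeas hindep hid hπ l₀).integral_eq]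
  calc _ ≤ ∫ ω, (2 ^ m : ℝ)⁻¹ * ∑ ε : Fin m → Bool,
          Φ (tetrahedralPoly x fun j => boolSign (ε (block hπ j)) * η l₀ j ω) ∂μ :=
        integral_mono_of_nonneg (.of_forall fun _ => hnonneg _)
          ((integrable_finsetSum _ fun ε _ => hint ε).const_mul _)
          (.of_forall fun _ => map_partitionForm_le x hconv heven hπ _)
    _ = _ := by
        rw [integral_const_mul, integral_finsetSum _ fun ε _ => hint ε]
        simp_rw [(hflip _).integral_eq]
        simp

end probability

end Decoupling

open Decoupling in
theorem stmt_13_general {Ω : Type*} [MeasureSpace Ω]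
    {X : Type*} [NormedAddCommGroup X] [NormedSpace ℂ X]
    (k m : ℕ) (hm : 0 < m)
    (x : Finset (Fin (k * m)) → X)
    (Φ : X → ℝ) (hΦconv : ConvexOn ℝ Set.univ Φ) (hΦ0 : ∀ y, 0 ≤ Φ y)
    (hΦeven : ∀ y, Φ (-y) = Φ y) (hΦcont : Continuous Φ)
    (η : Fin m → Fin (k * m) → Ω → ℂ)
    (hmeas : ∀ l j, Measurable (η l j))
    (hindep : iIndepFun
      (fun q : Fin m × Fin (k * m) => η q.1 q.2) ℙ)
    (hid : ∀ l l' j, Measure.map (η l j) ℙ = Measure.map (η l' j) ℙ)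
    (hsymm : ∀ l j, Measure.map (η l j) ℙ = Measure.map (fun ω => -η l j ω) ℙ)
    (hintP : Integrable (fun ω =>
      Φ (∑ A ∈ Finset.univ.filter (fun A : Finset (Fin (k * m)) => A.card = m),
        (∏ j ∈ A, η ⟨0, hm⟩ j ω) • x A)))
    (hintL : ∀ π ∈ orderedPartitions k m, Integrable (fun ω =>
      Φ (∑ i ∈ Fintype.piFinset (fun l => π l),
        (∏ l, η l (i l) ω) • x (Finset.image i Finset.univ)))) :
    (∫ ω, Φ ((((k : ℂ) ^ m) / (((k * m).choose m : ℕ) : ℂ)) •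
        ∑ A ∈ Finset.univ.filter (fun A : Finset (Fin (k * m)) => A.card = m),
          (∏ j ∈ A, η ⟨0, hm⟩ j ω) • x A)
      ≤ ((orderedPartitions k m).card : ℝ)⁻¹ *
          ∑ π ∈ orderedPartitions k m,
            ∫ ω, Φ (∑ i ∈ Fintype.piFinset (fun l => π l),
              (∏ l, η l (i l) ω) • x (Finset.image i Finset.univ))) ∧
    ((orderedPartitions k m).card : ℝ)⁻¹ *
        ∑ π ∈ orderedPartitions k m,
          ∫ ω, Φ (∑ i ∈ Fintype.piFinset (fun l => π l),
            (∏ l, η l (i l) ω) • x (Finset.image i Finset.univ))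
      ≤ ∫ ω, Φ (∑ A ∈ Finset.univ.filter (fun A : Finset (Fin (k * m)) => A.card = m),
          (∏ j ∈ A, η ⟨0, hm⟩ j ω) • x A) := by
  refine ⟨integral_map_smul_tetrahedralPoly_le x hΦcont hmeas hindep hΦconv hΦ0 hid _ hintL, ?_⟩
  rw [inv_mul_le_iff₀ (Nat.cast_pos.2 orderedPartitions_nonempty.card_pos), ← nsmul_eq_mul]
  exact sum_le_card_nsmul _ _ _ fun π hπ =>
    integral_map_partitionForm_le x hΦcont hmeas hindep hΦconv hΦ0 hΦeven hid hsymm _ hintP hπ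

/-- Decoupling in partitions for convex symmetric functions:
`E Φ((kᵐ/C(km,m)) P(ξ)) ≤ avg_π E Φ(L_π(ξ⁽¹⁾,…,ξ⁽ᵐ⁾)) ≤ E Φ(P(ξ))`,
where `P(z) = ∑_{|A|=m} x_A z_A` is tetrahedral `m`-homogeneous,
`L_π(z⁽¹⁾,…,z⁽ᵐ⁾) = ∑_{i₁∈B₁}⋯∑_{iₘ∈Bₘ} x_{{i₁,…,iₘ}} z⁽¹⁾_{i₁}⋯z⁽ᵐ⁾_{iₘ}`,
and the `η l j` (for `l` ranging over copies, `j` over coordinates) are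
independent symmetric random variables, identically distributed across copies;
`ξ := η 0` serves as the base random vector. -/
theorem stmt_13 {Ω : Type*} [MeasureSpace Ω] [IsProbabilityMeasure (ℙ : Measure Ω)]
    {X : Type*} [NormedAddCommGroup X] [NormedSpace ℂ X]
    (k m : ℕ) (hk : 0 < k) (hm : 0 < m)
    (x : Finset (Fin (k * m)) → X)
    (Φ : X → ℝ) (hΦconv : ConvexOn ℝ Set.univ Φ) (hΦ0 : ∀ y, 0 ≤ Φ y)
    (hΦeven : ∀ y, Φ (-y) = Φ y) (hΦcont : Continuous Φ)
    (η : Fin m → Fin (k * m) → Ω → ℂ)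
    (hmeas : ∀ l j, Measurable (η l j))
    (hindep : iIndepFun
      (fun q : Fin m × Fin (k * m) => η q.1 q.2) ℙ)
    (hid : ∀ l l' j, Measure.map (η l j) ℙ = Measure.map (η l' j) ℙ)
    (hsymm : ∀ l j, Measure.map (η l j) ℙ = Measure.map (fun ω => -η l j ω) ℙ)
    (hintP : Integrable (fun ω =>
      Φ (∑ A ∈ Finset.univ.filter (fun A : Finset (Fin (k * m)) => A.card = m),
        (∏ j ∈ A, η ⟨0, hm⟩ j ω) • x A)))
    (hintL : ∀ π ∈ orderedPartitions k m, Integrable (fun ω =>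
      Φ (∑ i ∈ Fintype.piFinset (fun l => π l),
        (∏ l, η l (i l) ω) • x (Finset.image i Finset.univ)))) :
    (∫ ω, Φ ((((k : ℂ) ^ m) / (((k * m).choose m : ℕ) : ℂ)) •
        ∑ A ∈ Finset.univ.filter (fun A : Finset (Fin (k * m)) => A.card = m),
          (∏ j ∈ A, η ⟨0, hm⟩ j ω) • x A)
      ≤ ((orderedPartitions k m).card : ℝ)⁻¹ *
          ∑ π ∈ orderedPartitions k m,
            ∫ ω, Φ (∑ i ∈ Fintype.piFinset (fun l => π l),
              (∏ l, η l (i l) ω) • x (Finset.image i Finset.univ))) ∧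
    ((orderedPartitions k m).card : ℝ)⁻¹ *
        ∑ π ∈ orderedPartitions k m,
          ∫ ω, Φ (∑ i ∈ Fintype.piFinset (fun l => π l),
            (∏ l, η l (i l) ω) • x (Finset.image i Finset.univ))
      ≤ ∫ ω, Φ (∑ A ∈ Finset.univ.filter (fun A : Finset (Fin (k * m)) => A.card = m),
          (∏ j ∈ A, η ⟨0, hm⟩ j ω) • x A) :=
  stmt_13_general k m hm x Φ hΦconv hΦ0 hΦeven hΦcont η hmeas hindep hid hsymm hintP hintL
end
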